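/- arXiv:2506.11357 — 5 statements merged into one kernel-verified Lean document; each statement's English description precedes it below -/
import Mathlib

section
/- Let w, w' : ℝ → ℝ^p be differentiable curves with w(0) = w'(0), and suppose for all t ≥ 0, d/dt ‖w(t) − w'(t)‖² ≤ (4L/n)‖w(t) − w'(t)‖ + 2β‖w(t) − w'(t)‖² for constants L, β > 0 and n ≥ 1. Then for all t ≥ 0, ‖w(t) − w'(t)‖ ≤ (2L/(βn))(e^{βt} − 1). -/
/-!
Apply Grönwall's inequality to `v = √(‖w - w'‖² + η²)` for `η > 0`. Unlike `‖w - w'‖`, this is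
differentiable, and `v' = (‖w - w'‖²)' / (2v) ≤ 2L/n + βv` because `‖w - w'‖ ≤ v`. So
`v t ≤ η e^{βt} + (2L/(βn))(e^{βt} - 1)`, and letting `η → 0` gives the bound.
-/

open Set

theorem gronwallBound_continuous_δ (K ε x : ℝ) : Continuous fun δ => gronwallBound δ K ε x := by
  by_cases hK : K = 0
  · simp only [gronwallBound_K0, hK]
    fun_prop
  · simp only [gronwallBound_of_K_ne_0 hK]
    fun_prop

theorem le_gronwallBound_of_deriv_right_le {f f' : ℝ → ℝ} {δ K ε a b : ℝ}
    (hf : ContinuousOn f (Icc a b)) (hf' : ∀ x ∈ Ico a b, HasDerivWithinAt f (f' x) (Ici x) x)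
    (ha : f a ≤ δ) (bound : ∀ x ∈ Ico a b, f' x ≤ K * f x + ε) :
    ∀ x ∈ Icc a b, f x ≤ gronwallBound δ K ε (x - a) :=
  le_gronwallBound_of_liminf_deriv_right_le hf
    (fun x hx _ hr => (hf' x hx).liminf_right_slope_le hr) ha bound

section DerivSq

variable {u g' : ℝ → ℝ} {δ K ε a b : ℝ}

theorem sqrt_sq_add_sq_le_gronwallBound (hK : 0 ≤ K) (hε : 0 ≤ ε)
    (hg : ContinuousOn (fun s => u s ^ 2) (Icc a b))
    (hg' : ∀ x ∈ Ico a b, HasDerivWithinAt (fun s => u s ^ 2) (g' x) (Ici x) x)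
    (ha : |u a| ≤ δ) (bound : ∀ x ∈ Ico a b, g' x ≤ 2 * ε * u x + 2 * K * u x ^ 2)
    {η : ℝ} (hη : 0 < η) :
    ∀ x ∈ Icc a b, √(u x ^ 2 + η ^ 2) ≤ gronwallBound (δ + η) K ε (x - a) := by
  have hpos : ∀ x, 0 < u x ^ 2 + η ^ 2 := fun x => by positivity
  refine le_gronwallBound_of_deriv_right_le ((hg.add continuousOn_const).sqrt)
    (fun x hx => ((hg' x hx).add_const (η ^ 2)).sqrt (hpos x).ne') ?_ ?_
  · rw [Real.sqrt_le_iff]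
    have hua := abs_nonneg (u a)
    exact ⟨by linarith, by nlinarith [sq_abs (u a)]⟩
  · intro x hx
    set v := √(u x ^ 2 + η ^ 2)
    have hv : 0 < v := Real.sqrt_pos.2 (hpos x)
    have huv : u x ≤ v := (le_abs_self _).trans (Real.abs_le_sqrt (by nlinarith))
    have hv2 : v ^ 2 = u x ^ 2 + η ^ 2 := Real.sq_sqrt (hpos x).le
    rw [div_le_iff₀ (by positivity)]
    nlinarith [bound x hx, mul_le_mul_of_nonneg_left huv hε]

theorem le_gronwallBound_of_deriv_sq_le (hK : 0 ≤ K) (hε : 0 ≤ ε)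
    (hg : ContinuousOn (fun s => u s ^ 2) (Icc a b))
    (hg' : ∀ x ∈ Ico a b, HasDerivWithinAt (fun s => u s ^ 2) (g' x) (Ici x) x)
    (ha : |u a| ≤ δ) (bound : ∀ x ∈ Ico a b, g' x ≤ 2 * ε * u x + 2 * K * u x ^ 2) :
    ∀ x ∈ Icc a b, u x ≤ gronwallBound δ K ε (x - a) := by
  intro x hx
  have hδ : ∀ δ' ∈ Ioi δ, u x ≤ gronwallBound δ' K ε (x - a) := by
    intro δ' hδ'
    have hη : 0 < δ' - δ := sub_pos.2 hδ'
    calc u x ≤ √(u x ^ 2 + (δ' - δ) ^ 2) :=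
          (le_abs_self _).trans (Real.abs_le_sqrt (by nlinarith))
      _ ≤ gronwallBound (δ + (δ' - δ)) K ε (x - a) :=
          sqrt_sq_add_sq_le_gronwallBound hK hε hg hg' ha bound hη x hx
      _ = gronwallBound δ' K ε (x - a) := by rw [add_sub_cancel]
  exact ge_of_tendsto
    ((gronwallBound_continuous_δ K ε (x - a)).tendsto δ |>.mono_left nhdsWithin_le_nhds)
    (eventually_nhdsWithin_of_forall hδ)

end DerivSq

/-- Grönwall-type stability bound for gradient flow on non-convex smooth losses:
if `w(0) = w'(0)` and `d/dt ‖w t - w' t‖² ≤ (4L/n)‖w t - w' t‖ + 2β‖w t - w' t‖²`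
for `t ≥ 0`, then `‖w t - w' t‖ ≤ (2L/(βn))(e^{βt} − 1)`. -/
theorem stmt_1 {p : ℕ} (w w' : ℝ → EuclideanSpace ℝ (Fin p))
    (hw : Differentiable ℝ w) (hw' : Differentiable ℝ w')
    (h0 : w 0 = w' 0) (L β n : ℝ) (hL : 0 < L) (hβ : 0 < β) (hn : 1 ≤ n)
    (hderiv : ∀ t ≥ (0 : ℝ),
      deriv (fun s => ‖w s - w' s‖ ^ 2) t ≤
        4 * L / n * ‖w t - w' t‖ + 2 * β * ‖w t - w' t‖ ^ 2) :
    ∀ t ≥ (0 : ℝ), ‖w t - w' t‖ ≤ 2 * L / (β * n) * (Real.exp (β * t) - 1) := by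
  intro t ht
  have hn0 : 0 < n := by linarith
  have hsq : Differentiable ℝ fun s => ‖w s - w' s‖ ^ 2 := (hw.sub hw').norm_sq ℝ
  have hbound := le_gronwallBound_of_deriv_sq_le (u := fun s => ‖w s - w' s‖) (δ := 0)
    (ε := 2 * L / n) hβ.le (by positivity) hsq.continuous.continuousOn
    (fun x _ => (hsq x).hasDerivAt.hasDerivWithinAt) (by simp [h0])
    (fun x hx => (hderiv x hx.1).trans_eq (by ring)) t ⟨ht, le_rfl⟩
  simp only [gronwallBound_of_K_ne_0 hβ.ne', sub_zero, zero_mul, zero_add] at hbound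
  convert hbound using 2
  field_simp
end

section
/- Let w : [0,T] → ℝ^p solve gradient flow dw/dt = −(1/n)Σᵢ ∇_w ℓ(w(t), z_i) with ℓ differentiable in w. Then for every z ∈ 𝒵, ℓ(w(T), z) = ℓ(w(0), z) − (1/n)Σ_{i=1}^n K_T(z, z_i; S), where K_T(z, z'; S) = ∫₀^T ⟨∇_w ℓ(w(t), z), ∇_w ℓ(w(t), z')⟩ dt. -/
/-! By the chain rule, along the gradient flow
`d/dt ℓ(w t, z) = ⟪∇ℓ(w t, z), w' t⟫ = -(1/n) Σᵢ ⟪∇ℓ(w t, z), ∇ℓ(w t, zᵢ)⟫`,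
and integrating over `[0, T]` turns the right-hand side into `-(1/n) Σᵢ K_T(z, zᵢ; S)`. -/

open InnerProductSpace MeasureTheory Set

section GradientAlongCurve

variable {E : Type*} [NormedAddCommGroup E] [InnerProductSpace ℝ E] [CompleteSpace E]
  {f : E → ℝ} {γ g γ' : ℝ → E}

theorem HasGradientAt.comp_hasDerivAt {f' v : E} {t : ℝ}
    (hf : HasGradientAt f f' (γ t)) (hγ : HasDerivAt γ v t) :
    HasDerivAt (f ∘ γ) ⟪f', v⟫_ℝ t :=
  hf.hasFDerivAt.comp_hasDerivAt t hγ

theorem integral_inner_gradient_velocity {a b : ℝ}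
    (hf : ∀ t ∈ uIcc a b, HasGradientAt f (g t) (γ t))
    (hγ : ∀ t ∈ uIcc a b, HasDerivAt γ (γ' t) t)
    (hint : IntervalIntegrable (fun t => ⟪g t, γ' t⟫_ℝ) volume a b) :
    ∫ t in a..b, ⟪g t, γ' t⟫_ℝ = f (γ b) - f (γ a) :=
  intervalIntegral.integral_eq_sub_of_hasDerivAt
    (fun t ht => (hf t ht).comp_hasDerivAt (hγ t ht)) hint

end GradientAlongCurve

theorem stmt_7_general {p : ℕ} {Z : Type*} (n : ℕ) (zs : Fin n → Z)
    (ℓ : EuclideanSpace ℝ (Fin p) → Z → ℝ)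
    (w : ℝ → EuclideanSpace ℝ (Fin p))
    (G : ℝ → Z → EuclideanSpace ℝ (Fin p))
    (hG : ∀ (z : Z) (t : ℝ), HasGradientAt (fun v => ℓ v z) (G t z) (w t))
    (hGcont : ∀ z : Z, Continuous fun t => G t z)
    (hflow : ∀ t : ℝ, HasDerivAt w (-((n : ℝ)⁻¹ • ∑ i, G t (zs i))) t)
    (T : ℝ) :
    ∀ z : Z, ℓ (w T) z =
      ℓ (w 0) z - (1 / n) * ∑ i, ∫ t in (0:ℝ)..T, (inner ℝ (G t z) (G t (zs i)) : ℝ) := by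
  intro z
  have hkernel : ∀ i, IntervalIntegrable (fun t => ⟪G t z, G t (zs i)⟫_ℝ) volume 0 T :=
    fun i => ((hGcont z).inner (hGcont (zs i))).intervalIntegrable 0 T
  have hpair : ∀ t, ⟪G t z, -((n : ℝ)⁻¹ • ∑ i, G t (zs i))⟫_ℝ
      = -((n : ℝ)⁻¹ * ∑ i, ⟪G t z, G t (zs i)⟫_ℝ) := fun t => by
    rw [inner_neg_right, inner_smul_right, inner_sum]
  have hftc := integral_inner_gradient_velocity (f := fun v => ℓ v z) (a := 0) (b := T)
    (fun t _ => hG z t) (fun t _ => hflow t)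
    (Continuous.intervalIntegrable (by fun_prop) 0 T)
  simp_rw [hpair, intervalIntegral.integral_neg, intervalIntegral.integral_const_mul,
    intervalIntegral.integral_finsetSum fun i _ => hkernel i] at hftc
  rw [one_div]
  linarith

/-- Equivalence of the gradient-flow loss with a kernel machine built from the
loss path kernel: if `w` solves `dw/dt = −(1/n) Σᵢ ∇_w ℓ(w(t), zᵢ)`, then for every `z`,
`ℓ(w T, z) = ℓ(w 0, z) − (1/n) Σᵢ ∫₀ᵀ ⟨∇_w ℓ(w t, z), ∇_w ℓ(w t, zᵢ)⟩ dt`. -/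
theorem stmt_7 {p : ℕ} {Z : Type*} (n : ℕ) (hn : 0 < n) (zs : Fin n → Z)
    (ℓ : EuclideanSpace ℝ (Fin p) → Z → ℝ)
    (w : ℝ → EuclideanSpace ℝ (Fin p))
    (G : ℝ → Z → EuclideanSpace ℝ (Fin p))
    (hG : ∀ (z : Z) (t : ℝ), HasGradientAt (fun v => ℓ v z) (G t z) (w t))
    (hGcont : ∀ z : Z, Continuous fun t => G t z)
    (hflow : ∀ t : ℝ, HasDerivAt w (-((n : ℝ)⁻¹ • ∑ i, G t (zs i))) t)
    (T : ℝ) (hT : 0 ≤ T) :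
    ∀ z : Z, ℓ (w T) z =
      ℓ (w 0) z - (1 / n) * ∑ i, ∫ t in (0:ℝ)..T, (inner ℝ (G t z) (G t (zs i)) : ℝ) :=
  stmt_7_general n zs ℓ w G hG hGcont hflow T
end

section
/- Let K be a symmetric positive-semidefinite kernel on 𝒳 with feature map Φ into Hilbert space H, and let ℱ = {x ↦ ⟨β, Φ(x)⟩ : ‖β‖ ≤ B}. Then the empirical Rademacher complexity satisfies the lower bound R̂(ℱ) ≥ (B/(√2 n))·sqrt(Σ_{i=1}^n K(x_i, x_i)). -/
/-!
Pairing with vectors of norm at most `B` has supremum `B ‖w‖`, so the bound is the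
Khintchine–Kahane inequality `E ‖Σᵢ σᵢ vᵢ‖ ≥ (Σᵢ ‖vᵢ‖²)^{1/2} / √2` for Rademacher signs,
combined with `E ‖Σᵢ σᵢ vᵢ‖² = Σᵢ ‖vᵢ‖²`.

For the inequality we follow Latała and Oleszkiewicz. Put `w σ = Σᵢ σᵢ vᵢ`, `f σ = ‖w σ‖`,
and let `σ⁽ⁱ⁾` be `σ` with its `i`-th sign flipped. Since `Σᵢ w σ⁽ⁱ⁾ = (n - 2) w σ`,
Cauchy–Schwarz gives `Σᵢ E[f(σ) f(σ⁽ⁱ⁾)] ≥ (n - 2) E f²`, while in the Walsh basis the left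
side is `Σ_S (n - 2|S|) f̂(S)²`. By Parseval this says `Σ_S (|S| - 1) f̂(S)² ≤ 0`. As `f` is
even, `f̂` vanishes on singletons, so `Σ_{|S| ≥ 2} f̂(S)² ≤ f̂(∅)²`, that is `E f² ≤ 2 (E f)²`.
-/

open Finset

section BooleanCube

variable {n : ℕ}

def boolSign (b : Bool) : ℝ := if b then 1 else -1

lemma boolSign_mul_self (b : Bool) : boolSign b * boolSign b = 1 := by
  cases b <;> norm_num [boolSign]

lemma one_add_boolSign_mul_boolSign (a b : Bool) :
    1 + boolSign a * boolSign b = if a = b then 2 else 0 := by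
  cases a <;> cases b <;> norm_num [boolSign]

def flipOn (A : Finset (Fin n)) (σ : Fin n → Bool) : Fin n → Bool :=
  fun i => if i ∈ A then !σ i else σ i

lemma flipOn_involutive (A : Finset (Fin n)) : Function.Involutive (flipOn A) := by
  intro σ
  funext i
  by_cases hi : i ∈ A <;> simp [flipOn, hi]

lemma sum_comp_flipOn {M : Type*} [AddCommMonoid M] (A : Finset (Fin n))
    (g : (Fin n → Bool) → M) : ∑ σ, g (flipOn A σ) = ∑ σ, g σ :=
  Equiv.sum_comp ((flipOn_involutive A).toPerm _) g

lemma boolSign_flipOn (A : Finset (Fin n)) (σ : Fin n → Bool) (i : Fin n) :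
    boolSign (flipOn A σ i) = (if i ∈ A then -1 else 1) * boolSign (σ i) := by
  by_cases hi : i ∈ A <;> cases h : σ i <;> simp [flipOn, boolSign, hi, h]

def walsh (S : Finset (Fin n)) (σ : Fin n → Bool) : ℝ := ∏ i ∈ S, boolSign (σ i)

lemma walsh_flipOn (S A : Finset (Fin n)) (σ : Fin n → Bool) :
    walsh S (flipOn A σ) = (-1) ^ #(S ∩ A) * walsh S σ := by
  simp only [walsh, boolSign_flipOn, prod_mul_distrib, prod_ite_mem, prod_const]

lemma sum_walsh_mul_walsh (σ τ : Fin n → Bool) :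
    ∑ S, walsh S σ * walsh S τ = if σ = τ then 2 ^ n else 0 := by
  calc ∑ S, walsh S σ * walsh S τ
      = ∏ i, (1 + boolSign (σ i) * boolSign (τ i)) := by
        rw [prod_one_add, powerset_univ]
        simp only [walsh, prod_mul_distrib]
    _ = if σ = τ then 2 ^ n else 0 := by
        simp only [one_add_boolSign_mul_boolSign, Fintype.prod_ite_zero, funext_iff]
        simp

def walshCoeff (f : (Fin n → Bool) → ℝ) (S : Finset (Fin n)) : ℝ := ∑ σ, f σ * walsh S σ

lemma walshCoeff_empty (f : (Fin n → Bool) → ℝ) : walshCoeff f ∅ = ∑ σ, f σ := by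
  simp [walshCoeff, walsh]

lemma walshCoeff_eq_zero_of_odd {f : (Fin n → Bool) → ℝ}
    (hf : ∀ σ, f (flipOn univ σ) = f σ)
    {S : Finset (Fin n)} (hS : Odd #S) : walshCoeff f S = 0 := by
  have h : walshCoeff f S = -walshCoeff f S := by
    conv_lhs => rw [walshCoeff, ← sum_comp_flipOn univ]
    simp only [walshCoeff, hf, walsh_flipOn, inter_univ, hS.neg_one_pow,
      ← sum_neg_distrib]
    ring_nf
  linarith

lemma sum_neg_one_pow_mul_walshCoeff_sq (f : (Fin n → Bool) → ℝ) (A : Finset (Fin n)) :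
    ∑ S, (-1) ^ #(S ∩ A) * walshCoeff f S ^ 2 = 2 ^ n * ∑ σ, f σ * f (flipOn A σ) := by
  calc ∑ S, (-1) ^ #(S ∩ A) * walshCoeff f S ^ 2
      = ∑ S, ∑ σ, ∑ τ, f σ * f τ * (walsh S (flipOn A σ) * walsh S τ) := by
        refine sum_congr rfl fun S _ => ?_
        rw [sq, walshCoeff, sum_mul_sum, mul_sum]
        refine sum_congr rfl fun σ _ => ?_
        rw [mul_sum]
        exact sum_congr rfl fun τ _ => by rw [walsh_flipOn]; ring
    _ = ∑ σ, ∑ τ, f σ * f τ * (if flipOn A σ = τ then 2 ^ n else 0) := by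
        rw [sum_comm]
        refine sum_congr rfl fun σ _ => ?_
        rw [sum_comm]
        simp only [← mul_sum, sum_walsh_mul_walsh]
    _ = 2 ^ n * ∑ σ, f σ * f (flipOn A σ) := by
        simp only [mul_ite, mul_zero, sum_ite_eq, mem_univ, if_true, mul_sum]
        exact sum_congr rfl fun σ _ => by ring

lemma sum_walshCoeff_sq (f : (Fin n → Bool) → ℝ) :
    ∑ S, walshCoeff f S ^ 2 = 2 ^ n * ∑ σ, f σ ^ 2 := by
  have h := sum_neg_one_pow_mul_walshCoeff_sq f ∅
  have hid : flipOn (∅ : Finset (Fin n)) = id := by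
    funext σ i
    simp [flipOn]
  simpa [hid, sq] using h

lemma sum_neg_one_pow_card_inter_singleton (S : Finset (Fin n)) :
    ∑ i, (-1 : ℝ) ^ #(S ∩ {i}) = n - 2 * #S := by
  have h : ∀ i, (-1 : ℝ) ^ #(S ∩ {i}) = 1 - 2 * if i ∈ S then 1 else 0 := by
    intro i
    by_cases hi : i ∈ S
    · simp [hi, inter_singleton_of_mem hi]; norm_num
    · simp [hi, inter_singleton_of_notMem hi]
  simp [h, sum_sub_distrib]
  ring

lemma sum_sub_two_mul_card_mul_walshCoeff_sq (f : (Fin n → Bool) → ℝ) :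
    ∑ S, (n - 2 * #S) * walshCoeff f S ^ 2 = 2 ^ n * ∑ i, ∑ σ, f σ * f (flipOn {i} σ) := by
  rw [mul_sum]
  simp only [← sum_neg_one_pow_mul_walshCoeff_sq]
  rw [sum_comm]
  simp only [← sum_mul, sum_neg_one_pow_card_inter_singleton]

lemma four_sub_two_mul_card_mul_walshCoeff_sq_le {f : (Fin n → Bool) → ℝ}
    (hf : ∀ σ, f (flipOn univ σ) = f σ)
    (S : Finset (Fin n)) :
    (4 - 2 * #S) * walshCoeff f S ^ 2 ≤ if S = ∅ then 4 * walshCoeff f ∅ ^ 2 else 0 := by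
  rcases S.eq_empty_or_nonempty with rfl | hne
  · simp
  rw [if_neg hne.ne_empty]
  rcases eq_or_ne #S 1 with h1 | h1
  · simp [walshCoeff_eq_zero_of_odd hf (h1 ▸ odd_one)]
  · have h2 : (2 : ℝ) ≤ #S := by exact_mod_cast (by have := hne.card_pos; omega : 2 ≤ #S)
    exact mul_nonpos_of_nonpos_of_nonneg (by linarith) (sq_nonneg _)

theorem two_pow_mul_sum_sq_le_of_even {f : (Fin n → Bool) → ℝ}
    (hf : ∀ σ, f (flipOn univ σ) = f σ)
    (hflip : (n - 2) * ∑ σ, f σ ^ 2 ≤ ∑ i, ∑ σ, f σ * f (flipOn {i} σ)) :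
    2 ^ n * ∑ σ, f σ ^ 2 ≤ 2 * (∑ σ, f σ) ^ 2 := by
  set c := walshCoeff f
  have hsplit : 2 * ∑ S, c S ^ 2 ≤ ∑ S, (4 - 2 * #S) * c S ^ 2 := by
    have h : (n - 2) * ∑ S, c S ^ 2 ≤ ∑ S, (n - 2 * #S) * c S ^ 2 := by
      rw [sum_walshCoeff_sq, sum_sub_two_mul_card_mul_walshCoeff_sq, mul_left_comm]
      gcongr
    rw [mul_sum, ← sub_nonneg, ← sum_sub_distrib] at h ⊢
    exact h.trans_eq (sum_congr rfl fun S _ => by ring)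
  calc 2 ^ n * ∑ σ, f σ ^ 2 ≤ ∑ S, (4 - 2 * #S) * c S ^ 2 / 2 := by
        rw [← sum_walshCoeff_sq, ← sum_div]; linarith
    _ ≤ ∑ S, (if S = ∅ then 4 * c ∅ ^ 2 else 0) / 2 := by
        gcongr with S; exact four_sub_two_mul_card_mul_walshCoeff_sq_le hf S
    _ = 2 * (∑ σ, f σ) ^ 2 := by
        rw [← walshCoeff_empty]; simp only [ite_div, zero_div, sum_ite_eq', mem_univ, if_true]
        ring

lemma sum_boolSign_mul_boolSign (i j : Fin n) :
    ∑ σ : Fin n → Bool, boolSign (σ i) * boolSign (σ j) = if i = j then 2 ^ n else 0 := by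
  split_ifs with hij
  · simp [hij, boolSign_mul_self]
  · have h := sum_comp_flipOn {i} fun σ => boolSign (σ i) * boolSign (σ j)
    simp only [boolSign_flipOn, mem_singleton, if_pos, if_neg (Ne.symm hij), one_mul, neg_mul,
      sum_neg_distrib] at h
    linarith

end BooleanCube

section KhintchineKahane

variable {H : Type*} [NormedAddCommGroup H] [InnerProductSpace ℝ H] {n : ℕ}

def rademacherSum (v : Fin n → H) (σ : Fin n → Bool) : H := ∑ i, boolSign (σ i) • v i

lemma sum_norm_rademacherSum_sq (v : Fin n → H) :
    ∑ σ, ‖rademacherSum v σ‖ ^ 2 = 2 ^ n * ∑ i, ‖v i‖ ^ 2 := by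
  have h : ∀ σ, ‖rademacherSum v σ‖ ^ 2
      = ∑ i, ∑ j, boolSign (σ i) * boolSign (σ j) * inner ℝ (v i) (v j) := by
    intro σ
    rw [← real_inner_self_eq_norm_sq, rademacherSum, sum_inner]
    simp only [inner_sum, real_inner_smul_left, real_inner_smul_right]
    exact sum_congr rfl fun i _ => sum_congr rfl fun j _ => by ring
  simp only [h, sum_comm (γ := Fin n → Bool), ← sum_mul, sum_boolSign_mul_boolSign, ite_mul,
    zero_mul, sum_ite_eq, mem_univ, if_true, real_inner_self_eq_norm_sq, mul_sum]

lemma norm_rademacherSum_flipOn_univ (v : Fin n → H) (σ : Fin n → Bool) :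
    ‖rademacherSum v (flipOn univ σ)‖ = ‖rademacherSum v σ‖ := by
  simp only [rademacherSum, boolSign_flipOn, mem_univ, if_true, neg_one_mul, neg_smul,
    sum_neg_distrib, norm_neg]

lemma rademacherSum_flipOn_singleton (v : Fin n → H) (σ : Fin n → Bool) (i : Fin n) :
    rademacherSum v (flipOn {i} σ) = rademacherSum v σ - (2 * boolSign (σ i)) • v i := by
  rw [rademacherSum, rademacherSum, eq_sub_iff_add_eq,
    ← Fintype.sum_ite_eq' i fun j => (2 * boolSign (σ j)) • v j, ← sum_add_distrib]
  refine sum_congr rfl fun j _ => ?_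
  by_cases hj : j = i
  · subst hj; simp only [boolSign_flipOn, mem_singleton, if_true, ← add_smul]; ring_nf
  · simp [boolSign_flipOn, hj]

lemma sub_two_mul_norm_rademacherSum_sq_le (v : Fin n → H) (σ : Fin n → Bool) :
    (n - 2) * ‖rademacherSum v σ‖ ^ 2
      ≤ ∑ i, ‖rademacherSum v σ‖ * ‖rademacherSum v (flipOn {i} σ)‖ := by
  set w := rademacherSum v σ with hw_def
  have hw : ∑ i, boolSign (σ i) * inner ℝ w (v i) = ‖w‖ ^ 2 := by
    rw [← real_inner_self_eq_norm_sq]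
    nth_rw 3 [hw_def]
    simp only [rademacherSum, inner_sum, real_inner_smul_right]
  have hinner : ∑ i, inner ℝ w (rademacherSum v (flipOn {i} σ)) = (n - 2) * ‖w‖ ^ 2 := by
    simp only [rademacherSum_flipOn_singleton, ← hw_def, inner_sub_right, real_inner_smul_right,
      real_inner_self_eq_norm_sq, sum_sub_distrib, mul_assoc, ← mul_sum, hw, sum_const,
      card_univ, Fintype.card_fin, nsmul_eq_mul]
    ring
  rw [← hinner]
  exact sum_le_sum fun i _ => real_inner_le_norm _ _

theorem sqrt_sum_norm_sq_le_sqrt_two_mul_mean_norm_rademacherSum (v : Fin n → H) :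
    √(∑ i, ‖v i‖ ^ 2) ≤ √2 * ((∑ σ, ‖rademacherSum v σ‖) / 2 ^ n) := by
  have hflip : (n - 2) * ∑ σ, ‖rademacherSum v σ‖ ^ 2
      ≤ ∑ i, ∑ σ, ‖rademacherSum v σ‖ * ‖rademacherSum v (flipOn {i} σ)‖ := by
    rw [mul_sum, sum_comm]
    exact sum_le_sum fun σ _ => sub_two_mul_norm_rademacherSum_sq_le v σ
  have h := two_pow_mul_sum_sq_le_of_even (norm_rademacherSum_flipOn_univ v) hflip
  rw [sum_norm_rademacherSum_sq] at h
  have hT : ∑ i, ‖v i‖ ^ 2 ≤ 2 * ((∑ σ, ‖rademacherSum v σ‖) / 2 ^ n) ^ 2 := by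
    rw [div_pow, ← mul_div_assoc, le_div_iff₀ (by positivity)]
    linarith
  calc √(∑ i, ‖v i‖ ^ 2) ≤ √(2 * ((∑ σ, ‖rademacherSum v σ‖) / 2 ^ n) ^ 2) :=
        Real.sqrt_le_sqrt hT
    _ = √2 * ((∑ σ, ‖rademacherSum v σ‖) / 2 ^ n) := by
        rw [Real.sqrt_mul zero_le_two, Real.sqrt_sq (by positivity)]

end KhintchineKahane

lemma sSup_inner_of_norm_le {H : Type*} [NormedAddCommGroup H] [InnerProductSpace ℝ H]
    {B : ℝ} (hB : 0 ≤ B) (w : H) :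
    sSup {r : ℝ | ∃ β : H, ‖β‖ ≤ B ∧ r = inner ℝ β w} = B * ‖w‖ := by
  have hle : ∀ r ∈ {r : ℝ | ∃ β : H, ‖β‖ ≤ B ∧ r = inner ℝ β w}, r ≤ B * ‖w‖ := by
    rintro _ ⟨β, hβ, rfl⟩
    exact (real_inner_le_norm β w).trans (mul_le_mul_of_nonneg_right hβ (norm_nonneg w))
  refine le_antisymm (csSup_le ⟨0, 0, by simpa using hB, by simp⟩ hle) (le_csSup ⟨_, hle⟩ ?_)
  rcases eq_or_ne w 0 with rfl | hw
  · exact ⟨0, by simpa using hB, by simp⟩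
  · have hw' : ‖w‖ ≠ 0 := norm_ne_zero_iff.mpr hw
    refine ⟨(B / ‖w‖) • w, ?_, ?_⟩
    · rw [norm_smul, Real.norm_of_nonneg (by positivity), div_mul_cancel₀ _ hw']
    · rw [real_inner_smul_left, real_inner_self_eq_norm_sq]
      field_simp

theorem stmt_10_general {X : Type*} {H : Type*} [NormedAddCommGroup H] [InnerProductSpace ℝ H]
    (Φ : X → H) (K : X → X → ℝ) (hK : ∀ x y, K x y = (inner ℝ (Φ x) (Φ y) : ℝ))
    (B : ℝ) (hB : 0 ≤ B) (n : ℕ) (x : Fin n → X)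
    (ε : Bool → ℝ) (hε : ε = fun b => if b then 1 else -1) :
    (B / (Real.sqrt 2 * n)) * Real.sqrt (∑ i, K (x i) (x i)) ≤
      (1 / n) * ((∑ σ : Fin n → Bool,
        sSup {r : ℝ | ∃ β : H, ‖β‖ ≤ B ∧
          r = ∑ i, ε (σ i) * (inner ℝ β (Φ (x i)) : ℝ)}) / 2 ^ n) := by
  subst hε
  have hsup : ∀ σ : Fin n → Bool, sSup {r : ℝ | ∃ β : H, ‖β‖ ≤ B ∧
      r = ∑ i, (if σ i then 1 else -1) * (inner ℝ β (Φ (x i)) : ℝ)}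
        = B * ‖rademacherSum (fun i => Φ (x i)) σ‖ := by
    intro σ
    simp only [← sSup_inner_of_norm_le hB, rademacherSum, inner_sum, real_inner_smul_right,
      boolSign]
  have hKK := sqrt_sum_norm_sq_le_sqrt_two_mul_mean_norm_rademacherSum fun i => Φ (x i)
  simp only [hK, real_inner_self_eq_norm_sq, hsup, ← mul_sum]
  calc B / (√2 * n) * √(∑ i, ‖Φ (x i)‖ ^ 2)
      = B * (√(∑ i, ‖Φ (x i)‖ ^ 2) / √2) / n := by ring
    _ ≤ B * ((∑ σ, ‖rademacherSum (fun i => Φ (x i)) σ‖) / 2 ^ n) / n := by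
        gcongr B * ?_ / _
        rwa [div_le_iff₀' (by positivity)]
    _ = _ := by ring

/-- Khintchine–Kahane lower bound for the Rademacher complexity of a norm-bounded
kernel class: with `K(x,y) = ⟨Φ x, Φ y⟩` and `ℱ = {x ↦ ⟨β, Φ x⟩ : ‖β‖ ≤ B}`, the
empirical Rademacher complexity on `x₁,…,xₙ` is at least `(B/(√2 n))√(Σᵢ K(xᵢ,xᵢ))`. -/
theorem stmt_10 {X : Type*} {H : Type*} [NormedAddCommGroup H] [InnerProductSpace ℝ H]
    (Φ : X → H) (K : X → X → ℝ) (hK : ∀ x y, K x y = (inner ℝ (Φ x) (Φ y) : ℝ))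
    (B : ℝ) (hB : 0 ≤ B) (n : ℕ) (hn : 0 < n) (x : Fin n → X)
    (ε : Bool → ℝ) (hε : ε = fun b => if b then 1 else -1) :
    (B / (Real.sqrt 2 * n)) * Real.sqrt (∑ i, K (x i) (x i)) ≤
      (1 / n) * ((∑ σ : Fin n → Bool,
        sSup {r : ℝ | ∃ β : H, ‖β‖ ≤ B ∧
          r = ∑ i, ε (σ i) * (inner ℝ β (Φ (x i)) : ℝ)}) / 2 ^ n) :=
  stmt_10_general Φ K hK B hB n x ε hε
end

section
/- Let w : [0,∞) → ℝ^p solve dw/dt = −(1/n)·∇_w (½‖f(w(t),X) − y‖²) where f(·, X) : ℝ^p → ℝ^n is differentiable, and suppose the NTK Gram matrix Θ̂(w) = ∇_w f(w,X)·∇_w f(w,X)ᵀ ∈ ℝ^{n×n} satisfies λ_min(Θ̂(w(t))) ≥ λ_min > 0 for all t ∈ [0,T]. Then for all t ∈ [0,T], ‖f(w(t),X) − y‖² ≤ e^{−(2λ_min/n)t}·‖f(w(0),X) − y‖². -/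
/-!
Along the flow the residual `r = f ∘ w - y` satisfies `d‖r‖²/dt = 2⟪r, J ẇ⟫ = -(2/n)‖Jᵀ r‖²`,
which the kernel bound turns into the differential inequality `d‖r‖²/dt ≤ -(2λ/n)‖r‖²`;
Grönwall's inequality then gives the exponential decay.
-/

open Set Real

theorem le_mul_exp_of_hasDerivAt_le_mul {g g' : ℝ → ℝ} {K a b : ℝ}
    (hg : ∀ x ∈ Icc a b, HasDerivAt g (g' x) x) (bound : ∀ x ∈ Ico a b, g' x ≤ K * g x) :
    ∀ x ∈ Icc a b, g x ≤ g a * exp (K * (x - a)) := by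
  intro x hx
  rw [← gronwallBound_ε0]
  refine le_gronwallBound_of_liminf_deriv_right_le (ε := 0)
    (fun x hx => (hg x hx).continuousAt.continuousWithinAt) (fun x hx r hr => ?_) le_rfl
    (by simpa using bound) x hx
  simpa [slope_def_field, div_eq_inv_mul] using
    ((hg x (Ico_subset_Icc_self hx)).hasDerivWithinAt (s := Ici x)).liminf_right_slope_le hr

theorem hasDerivAt_norm_sq_residual_of_gradient_flow
    {E F : Type*} [NormedAddCommGroup E] [InnerProductSpace ℝ E] [CompleteSpace E]
    [NormedAddCommGroup F] [InnerProductSpace ℝ F] [CompleteSpace F]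
    {f : E → F} {w : ℝ → E} {y : F} {c t : ℝ} (hf : DifferentiableAt ℝ f (w t))
    (hw : HasDerivAt w (-(c • (fderiv ℝ f (w t)).adjoint (f (w t) - y))) t) :
    HasDerivAt (fun u => ‖f (w u) - y‖ ^ 2)
      (-(2 * c) * ‖(fderiv ℝ f (w t)).adjoint (f (w t) - y)‖ ^ 2) t := by
  refine ((hf.hasFDerivAt.comp_hasDerivAt t hw).sub_const y).norm_sq.congr_deriv ?_
  rw [Function.comp_apply, map_neg, map_smul, inner_neg_right, real_inner_smul_right,
    ← ContinuousLinearMap.adjoint_inner_left, real_inner_self_eq_norm_sq]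
  ring

theorem stmt_15_general {p n : ℕ} (f : EuclideanSpace ℝ (Fin p) → EuclideanSpace ℝ (Fin n))
    (hf : Differentiable ℝ f) (y : EuclideanSpace ℝ (Fin n))
    (w : ℝ → EuclideanSpace ℝ (Fin p)) (T lmin : ℝ)
    (hflow : ∀ t : ℝ, HasDerivAt w
      (-(((n : ℝ))⁻¹ •
        (ContinuousLinearMap.adjoint (fderiv ℝ f (w t))) (f (w t) - y))) t)
    (hNTK : ∀ t ∈ Set.Icc (0:ℝ) T,
      lmin * ‖f (w t) - y‖ ^ 2 ≤
        ‖(ContinuousLinearMap.adjoint (fderiv ℝ f (w t))) (f (w t) - y)‖ ^ 2) :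
    ∀ t ∈ Set.Icc (0:ℝ) T,
      ‖f (w t) - y‖ ^ 2 ≤ Real.exp (-(2 * lmin / n) * t) * ‖f (w 0) - y‖ ^ 2 := by
  intro t ht
  have hdecay_rate : ∀ s ∈ Ico (0:ℝ) T,
      -(2 * (n : ℝ)⁻¹) * ‖(fderiv ℝ f (w s)).adjoint (f (w s) - y)‖ ^ 2 ≤
        -(2 * lmin / n) * ‖f (w s) - y‖ ^ 2 := fun s hs =>
    calc -(2 * (n : ℝ)⁻¹) * ‖(fderiv ℝ f (w s)).adjoint (f (w s) - y)‖ ^ 2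
        ≤ -(2 * (n : ℝ)⁻¹) * (lmin * ‖f (w s) - y‖ ^ 2) :=
          mul_le_mul_of_nonpos_left (hNTK s (Ico_subset_Icc_self hs))
            (neg_nonpos.mpr (by positivity))
      _ = -(2 * lmin / n) * ‖f (w s) - y‖ ^ 2 := by ring
  have hgronwall := le_mul_exp_of_hasDerivAt_le_mul
    (fun s _ => hasDerivAt_norm_sq_residual_of_gradient_flow (hf (w s)) (hflow s))
    hdecay_rate t ht
  rwa [sub_zero, mul_comm] at hgronwall

/-- Exponential convergence of gradient flow on mean-square loss under a
lower-bounded NTK: if `w` solves `dw/dt = −(1/n)·Jᵀ(f(w)−y)` (the gradient flow of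
`(1/(2n))‖f(w,X)−y‖²`) and the NTK Gram matrix `J Jᵀ` has smallest eigenvalue at
least `λmin > 0` along the trajectory (equivalently `λmin‖r‖² ≤ ‖Jᵀ r‖²` for the
residual `r`), then `‖f(w t) − y‖² ≤ e^{−(2λmin/n)t}‖f(w 0) − y‖²` on `[0,T]`. -/
theorem stmt_15 {p n : ℕ} (f : EuclideanSpace ℝ (Fin p) → EuclideanSpace ℝ (Fin n))
    (hf : Differentiable ℝ f) (y : EuclideanSpace ℝ (Fin n))
    (w : ℝ → EuclideanSpace ℝ (Fin p)) (T lmin : ℝ) (hT : 0 ≤ T) (hlmin : 0 < lmin)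
    (hn : 0 < n)
    (hflow : ∀ t : ℝ, HasDerivAt w
      (-(((n : ℝ))⁻¹ •
        (ContinuousLinearMap.adjoint (fderiv ℝ f (w t))) (f (w t) - y))) t)
    (hNTK : ∀ t ∈ Set.Icc (0:ℝ) T,
      lmin * ‖f (w t) - y‖ ^ 2 ≤
        ‖(ContinuousLinearMap.adjoint (fderiv ℝ f (w t))) (f (w t) - y)‖ ^ 2) :
    ∀ t ∈ Set.Icc (0:ℝ) T,
      ‖f (w t) - y‖ ^ 2 ≤ Real.exp (-(2 * lmin / n) * t) * ‖f (w 0) - y‖ ^ 2 :=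
  stmt_15_general f hf y w T lmin hflow hNTK
end

section
/- Consider ridgeless kernel regression (λ = 0) trained by gradient flow from w_0 = 0 on L_S(w) = (1/(2n))‖φ(X)ᵀw − y‖², with kernel Gram matrix K(X,X) = φ(X)ᵀφ(X) assumed invertible and K(x_i,x_i) ≤ K_max for all i. Then the quantity Γ = (2/n)·sqrt(∫₀^T ‖∇_w L_S(w_t)‖² dt)·sqrt(Σᵢ ∫₀^T ‖∇_w ℓ(w_t,z_i)‖² dt) satisfies Γ ≤ (1/n)·sqrt(K_max)·sqrt(yᵀ K(X,X)^{−1} y)·‖y‖. -/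
/-! Along the flow the residual `r = φXᵀ w - y` solves `r' = -(1/n) K r`. Hence `‖r‖² / (2n)`
decreases at rate `‖∇L_S‖²` and `(n/2) rᵀ K⁻¹ r` at rate `‖r‖²`. Integrating from `r 0 = -y`
bounds the first integral in `Γ` by `‖y‖² / (2n)` and, after `K i i ≤ Kmax`, the second by
`Kmax (n/2) yᵀ K⁻¹ y`; the product of the square roots is the claimed bound. -/

open Matrix

section Calculus

variable {ι κ : Type*} [Fintype ι] [Fintype κ] {t : ℝ}

theorem HasDerivAt.const_mulVec (A : Matrix κ ι ℝ) {u : ℝ → ι → ℝ} {u' : ι → ℝ}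
    (hu : HasDerivAt u u' t) : HasDerivAt (fun s => A *ᵥ u s) (A *ᵥ u') t :=
  (LinearMap.toContinuousLinearMap (mulVecLin A)).hasFDerivAt.comp_hasDerivAt t hu

theorem HasDerivAt.dotProduct {u v : ℝ → ι → ℝ} {u' v' : ι → ℝ} (hu : HasDerivAt u u' t)
    (hv : HasDerivAt v v' t) :
    HasDerivAt (fun s => u s ⬝ᵥ v s) (u' ⬝ᵥ v t + u t ⬝ᵥ v') t :=
  (HasDerivAt.fun_sum fun i _ => (hasDerivAt_pi.1 hu i).fun_mul (hasDerivAt_pi.1 hv i)).congr_deriv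
    Finset.sum_add_distrib

theorem HasDerivAt.dotProduct_mulVec_self {M : Matrix ι ι ℝ} (hM : M.IsSymm)
    {u : ℝ → ι → ℝ} {u' : ι → ℝ} (hu : HasDerivAt u u' t) :
    HasDerivAt (fun s => u s ⬝ᵥ M *ᵥ u s) (2 * (u' ⬝ᵥ M *ᵥ u t)) t := by
  convert hu.dotProduct (hu.const_mulVec M) using 1
  rw [dotProduct_mulVec (u t), ← mulVec_transpose, hM.eq, dotProduct_comm]
  ring

theorem intervalIntegral.integral_le_of_hasDerivAt_neg {f F : ℝ → ℝ} {a b : ℝ}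
    (hF : ∀ t, HasDerivAt F (-f t) t) (hf : Continuous f) (hb : 0 ≤ F b) :
    ∫ t in a..b, f t ≤ F a := by
  have := integral_eq_sub_of_hasDerivAt (fun t _ => hF t) (hf.neg.intervalIntegrable a b)
  rw [integral_neg] at this
  linarith

theorem intervalIntegral.integral_sum_sq_mul_le {r : ℝ → ι → ℝ} (hr : Continuous r)
    {d : ι → ℝ} {D : ℝ} (hd : ∀ i, d i ≤ D) {a b : ℝ} (hab : a ≤ b) :
    ∫ t in a..b, ∑ i, r t i ^ 2 * d i ≤ D * ∫ t in a..b, ∑ i, r t i ^ 2 := by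
  rw [← integral_const_mul]
  refine integral_mono_on hab ((by fun_prop : Continuous _).intervalIntegrable a b)
    ((by fun_prop : Continuous _).intervalIntegrable a b) fun t _ => ?_
  rw [Finset.mul_sum]
  exact Finset.sum_le_sum fun i _ => by rw [mul_comm D]; gcongr; exact hd i

end Calculus

theorem Matrix.posSemidef_transpose_mul_self {ι κ : Type*} [Fintype ι] [Fintype κ]
    (A : Matrix κ ι ℝ) : (Aᵀ * A).PosSemidef := by
  simpa using posSemidef_conjTranspose_mul_self A

theorem Matrix.dotProduct_transpose_mul_self_mulVec {ι κ : Type*} [Fintype ι] [Fintype κ]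
    (A : Matrix κ ι ℝ) (v : ι → ℝ) : v ⬝ᵥ (Aᵀ * A) *ᵥ v = A *ᵥ v ⬝ᵥ A *ᵥ v := by
  rw [← mulVec_mulVec, dotProduct_mulVec, vecMul_transpose]

theorem Matrix.mulVec_dotProduct_inv_mulVec {ι : Type*} [Fintype ι] [DecidableEq ι]
    {M : Matrix ι ι ℝ} (hM : M.IsHermitian) (h : IsUnit M.det) (v : ι → ℝ) :
    M *ᵥ v ⬝ᵥ M⁻¹ *ᵥ v = v ⬝ᵥ v := by
  rw [dotProduct_comm, dotProduct_mulVec, ← mulVec_transpose, isHermitian_iff_isSymm.1 hM |>.eq,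
    mulVec_mulVec, mul_nonsing_inv _ h, one_mulVec]

section GradientFlow

variable {ι κ : Type*} [Fintype ι] [Fintype κ] (A : Matrix κ ι ℝ) (y : ι → ℝ)
  {c : ℝ} {w : ℝ → κ → ℝ}

theorem hasDerivAt_residual (hflow : ∀ t, HasDerivAt w (-(c • A *ᵥ (Aᵀ *ᵥ w t - y))) t)
    (t : ℝ) :
    HasDerivAt (fun s => Aᵀ *ᵥ w s - y) (-(c • (Aᵀ * A) *ᵥ (Aᵀ *ᵥ w t - y))) t :=
  ((hflow t).const_mulVec Aᵀ).sub_const y |>.congr_deriv <| by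
    rw [mulVec_neg, mulVec_smul, mulVec_mulVec]

theorem continuous_residual (hflow : ∀ t, HasDerivAt w (-(c • A *ᵥ (Aᵀ *ᵥ w t - y))) t) :
    Continuous fun t => Aᵀ *ᵥ w t - y :=
  continuous_iff_continuousAt.2 fun t => (hasDerivAt_residual A y hflow t).continuousAt

theorem integral_sum_sq_smul_gradient_le (hc : 0 ≤ c)
    (hflow : ∀ t, HasDerivAt w (-(c • A *ᵥ (Aᵀ *ᵥ w t - y))) t) (T : ℝ) :
    ∫ t in (0 : ℝ)..T, ∑ j, (c * (A *ᵥ (Aᵀ *ᵥ w t - y)) j) ^ 2 ≤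
      c / 2 * ((Aᵀ *ᵥ w 0 - y) ⬝ᵥ (Aᵀ *ᵥ w 0 - y)) := by
  have hr := hasDerivAt_residual A y hflow
  have hrc := continuous_residual A y hflow
  refine intervalIntegral.integral_le_of_hasDerivAt_neg
    (F := fun t => c / 2 * ((Aᵀ *ᵥ w t - y) ⬝ᵥ (Aᵀ *ᵥ w t - y))) (fun t => ?_) (by fun_prop) ?_
  · refine (((hr t).dotProduct (hr t)).const_mul (c / 2)).congr_deriv ?_
    rw [dotProduct_comm _ (Aᵀ *ᵥ w t - y), dotProduct_neg, dotProduct_smul, smul_eq_mul,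
      dotProduct_transpose_mul_self_mulVec]
    simp only [mul_pow, ← Finset.mul_sum, dotProduct, ← sq]
    ring
  · exact mul_nonneg (by positivity) (Finset.sum_nonneg fun i _ => mul_self_nonneg _)

theorem integral_sum_sq_residual_le [DecidableEq ι] (hA : IsUnit (Aᵀ * A).det) (hc : 0 < c)
    (hflow : ∀ t, HasDerivAt w (-(c • A *ᵥ (Aᵀ *ᵥ w t - y))) t) (T : ℝ) :
    ∫ t in (0 : ℝ)..T, ∑ i, (Aᵀ *ᵥ w t - y) i ^ 2 ≤
      1 / (2 * c) * ((Aᵀ *ᵥ w 0 - y) ⬝ᵥ (Aᵀ * A)⁻¹ *ᵥ (Aᵀ *ᵥ w 0 - y)) := by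
  have hr := hasDerivAt_residual A y hflow
  have hrc := continuous_residual A y hflow
  have hpsd := (posSemidef_transpose_mul_self A).inv
  refine intervalIntegral.integral_le_of_hasDerivAt_neg
    (F := fun t => 1 / (2 * c) * ((Aᵀ *ᵥ w t - y) ⬝ᵥ (Aᵀ * A)⁻¹ *ᵥ (Aᵀ *ᵥ w t - y)))
    (fun t => ?_) (by fun_prop) ?_
  · have hsymm : (Aᵀ * A)⁻¹.IsSymm := isHermitian_iff_isSymm.1 hpsd.isHermitian
    refine (((hr t).dotProduct_mulVec_self hsymm).const_mul (1 / (2 * c))).congr_deriv ?_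
    rw [neg_dotProduct, smul_dotProduct, smul_eq_mul,
      mulVec_dotProduct_inv_mulVec (posSemidef_transpose_mul_self A).isHermitian hA]
    field_simp
    simp only [dotProduct, sq]
  · simpa using mul_nonneg (by positivity) (hpsd.dotProduct_mulVec_nonneg (Aᵀ *ᵥ w T - y))

end GradientFlow

/-- Γ-bound for ridgeless kernel regression trained by gradient flow from `w₀ = 0`:
with `L_S(w) = (1/(2n))‖φ(X)ᵀw − y‖²`, Gram matrix `K = φ(X)ᵀφ(X)` invertible and
`K(xᵢ,xᵢ) ≤ K_max`, the quantity
`Γ = (2/n)·√(∫₀ᵀ‖∇L_S(w_t)‖²dt)·√(Σᵢ∫₀ᵀ‖∇ℓ(w_t,zᵢ)‖²dt)` satisfies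
`Γ ≤ (1/n)·√K_max·√(yᵀK⁻¹y)·‖y‖`. Here `‖∇L_S(w)‖² = Σⱼ((1/n)φ(X)(φ(X)ᵀw−y))ⱼ²`
and `‖∇ℓ(w,zᵢ)‖² = ((φ(X)ᵀw−y)ᵢ)²·Kᵢᵢ`. -/
theorem stmt_18 (p n : ℕ) (hn : 0 < n) (φX : Matrix (Fin p) (Fin n) ℝ)
    (y : Fin n → ℝ) (K : Matrix (Fin n) (Fin n) ℝ) (hK : K = φXᵀ * φX)
    (hKinv : IsUnit K.det) (Kmax : ℝ) (hKmax : ∀ i, K i i ≤ Kmax)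
    (w : ℝ → Fin p → ℝ) (hw0 : w 0 = 0)
    (hflow : ∀ t : ℝ, HasDerivAt w
      (-((1 / (n : ℝ)) • φX.mulVec (φXᵀ.mulVec (w t) - y))) t)
    (T : ℝ) (hT : 0 ≤ T)
    (Γ : ℝ)
    (hΓ : Γ = (2 / (n : ℝ)) *
      Real.sqrt (∫ t in (0:ℝ)..T,
        ∑ j : Fin p, ((1 / (n : ℝ)) * φX.mulVec (φXᵀ.mulVec (w t) - y) j) ^ 2) *
      Real.sqrt (∫ t in (0:ℝ)..T,
        ∑ i : Fin n, (φXᵀ.mulVec (w t) - y) i ^ 2 * K i i)) :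
    Γ ≤ (1 / (n : ℝ)) * Real.sqrt Kmax *
      Real.sqrt (y ⬝ᵥ K⁻¹.mulVec y) * Real.sqrt (∑ i, y i ^ 2) := by
  subst hK hΓ
  have hc : (0 : ℝ) < 1 / n := by positivity
  have hr0 : φXᵀ *ᵥ w 0 - y = -y := by simp [hw0]
  have hgrad := integral_sum_sq_smul_gradient_le φX y hc.le hflow T
  have hres := integral_sum_sq_residual_le φX y hKinv hc hflow T
  have hdiag := intervalIntegral.integral_sum_sq_mul_le (continuous_residual φX y hflow) hKmax hT
  have hKmax0 : 0 ≤ Kmax := (posSemidef_transpose_mul_self φX).diag_nonneg.trans (hKmax ⟨0, hn⟩)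
  have hq : 0 ≤ y ⬝ᵥ (φXᵀ * φX)⁻¹ *ᵥ y := by
    simpa using (posSemidef_transpose_mul_self φX).inv.dotProduct_mulVec_nonneg y
  have hY : y ⬝ᵥ y = ∑ i, y i ^ 2 := by simp only [dotProduct, sq]
  rw [hr0, neg_dotProduct_neg, hY] at hgrad
  rw [hr0, mulVec_neg, neg_dotProduct_neg] at hres
  set q := y ⬝ᵥ (φXᵀ * φX)⁻¹ *ᵥ y
  set Y := ∑ i, y i ^ 2
  calc _ ≤ 2 / n * √(1 / n / 2 * Y) * √(Kmax * (1 / (2 * (1 / n)) * q)) := by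
        gcongr
        exact hdiag.trans (by gcongr)
    _ = 2 / n * √((1 / 2) ^ 2 * (Kmax * q * Y)) := by
        rw [mul_assoc, ← Real.sqrt_mul (by positivity)]
        field_simp
    _ = _ := by
        rw [Real.sqrt_mul (by positivity), Real.sqrt_sq (by norm_num),
          Real.sqrt_mul (by positivity), Real.sqrt_mul hKmax0]
        ring
end
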